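/- Let X be a normed space with a subspace X_h, and suppose: (i) a discrete inf-sup condition sup_{φ ∈ X_h, φ≠0} ⟨G'(x⁰)w, φ⟩/‖φ‖ ≥ c‖w‖ for all w ∈ X_h with c > 0; (ii) a quadratic residual expansion ⟨G(y), φ⟩ = ⟨G(x⁰), φ⟩ + ⟨G'(x⁰)(y - x⁰), φ⟩ + R(x⁰, y, φ) with |R| ≤ C‖y - x⁰‖²‖φ‖. Let x_h ∈ X_h satisfy ⟨G(x_h), φ⟩ = 0 for all φ ∈ X_h (the Galerkin solution), and let x¹ ∈ X_h be the Newton iterate from initial guess x⁰ ∈ X_h, i.e., ⟨G'(x⁰)(x¹ - x⁰), φ⟩ = -⟨G(x⁰), φ⟩ for all φ ∈ X_h. Then ‖x_h - x¹‖ ≤ (C/c)‖x_h - x⁰‖². -/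

import Mathlib

/-!
Subtracting the Newton equation from the Taylor expansion of the Galerkin equation at `x₀`
shows that `G'(x⁰)(x_h - x¹)` equals the negated remainder `-R(x⁰, x_h, ·)` on `X_h`, which is
`O(‖x_h - x⁰‖²)`. The discrete inf-sup condition turns this bound on the functional into the
bound `c ‖x_h - x¹‖ ≤ C ‖x_h - x⁰‖²` on its argument.
-/

section

variable {X : Type*} [NormedAddCommGroup X]

theorem le_of_forall_exists_div_norm_gt {S : Set X} {f : X → ℝ} {a b : ℝ}
    (hsup : ∀ δ > (0 : ℝ), ∃ φ ∈ S, φ ≠ 0 ∧ f φ / ‖φ‖ > a - δ)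
    (hbound : ∀ φ ∈ S, φ ≠ 0 → f φ ≤ b * ‖φ‖) : a ≤ b := by
  refine le_of_forall_pos_lt_add fun δ hδ => ?_
  obtain ⟨φ, hφS, hφ0, hgt⟩ := hsup δ hδ
  have hquot : f φ / ‖φ‖ ≤ b := (div_le_iff₀ (norm_pos_iff.mpr hφ0)).mpr (hbound φ hφS hφ0)
  linarith

variable [NormedSpace ℝ X]

theorem newton_galerkin_error_eq_neg_remainder {G : X → X →L[ℝ] ℝ} {A : X →L[ℝ] X →L[ℝ] ℝ}
    {x₀ xh x₁ φ : X} {r : ℝ} (hTaylor : G xh φ = G x₀ φ + A (xh - x₀) φ + r)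
    (hGalerkin : G xh φ = 0) (hNewton : A (x₁ - x₀) φ = -G x₀ φ) :
    A (xh - x₁) φ = -r := by
  have hsplit : A (xh - x₁) φ = A (xh - x₀) φ - A (x₁ - x₀) φ := by
    rw [← sub_apply, ← map_sub, sub_sub_sub_cancel_right]
  linarith

end

theorem stmt_4_general {X : Type*} [NormedAddCommGroup X] [NormedSpace ℝ X]
    (G : X → X →L[ℝ] ℝ) (G' : X → X →L[ℝ] X →L[ℝ] ℝ)
    (R : X → X → X → ℝ) (c C : ℝ) (hc : 0 < c)
    (Xh : Submodule ℝ X) (x₀ : X)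
    (hinfsup : ∀ w ∈ Xh, ∀ δ > (0 : ℝ), ∃ φ ∈ Xh, φ ≠ 0 ∧
      G' x₀ w φ / ‖φ‖ > c * ‖w‖ - δ)
    (hTaylor : ∀ y φ : X, G y φ = G x₀ φ + G' x₀ (y - x₀) φ + R x₀ y φ)
    (hR : ∀ y φ : X, |R x₀ y φ| ≤ C * ‖y - x₀‖ ^ 2 * ‖φ‖)
    (xh : X) (hxh : xh ∈ Xh) (hGalerkin : ∀ φ ∈ Xh, G xh φ = 0)
    (x₁ : X) (hx₁ : x₁ ∈ Xh)
    (hNewton : ∀ φ ∈ Xh, G' x₀ (x₁ - x₀) φ = -G x₀ φ) :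
    ‖xh - x₁‖ ≤ (C / c) * ‖xh - x₀‖ ^ 2 := by
  have hresidual : ∀ φ ∈ Xh, φ ≠ 0 → G' x₀ (xh - x₁) φ ≤ C * ‖xh - x₀‖ ^ 2 * ‖φ‖ := by
    intro φ hφ _
    rw [newton_galerkin_error_eq_neg_remainder (hTaylor xh φ) (hGalerkin φ hφ) (hNewton φ hφ)]
    exact (neg_le_abs _).trans (hR xh φ)
  have hstab : c * ‖xh - x₁‖ ≤ C * ‖xh - x₀‖ ^ 2 :=
    le_of_forall_exists_div_norm_gt (hinfsup _ (Xh.sub_mem hxh hx₁)) hresidual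
  rw [div_mul_eq_mul_div, le_div_iff₀ hc]
  linarith

/-- one Newton step squares the distance to the Galerkin solution. -/
theorem stmt_4 {X : Type*} [NormedAddCommGroup X] [NormedSpace ℝ X]
    (G : X → X →L[ℝ] ℝ) (G' : X → X →L[ℝ] X →L[ℝ] ℝ)
    (R : X → X → X → ℝ) (c C : ℝ) (hc : 0 < c) (hC : 0 < C)
    (Xh : Submodule ℝ X) (x₀ : X) (hx₀ : x₀ ∈ Xh)
    (hinfsup : ∀ w ∈ Xh, ∀ δ > (0 : ℝ), ∃ φ ∈ Xh, φ ≠ 0 ∧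
      G' x₀ w φ / ‖φ‖ > c * ‖w‖ - δ)
    (hTaylor : ∀ y φ : X, G y φ = G x₀ φ + G' x₀ (y - x₀) φ + R x₀ y φ)
    (hR : ∀ y φ : X, |R x₀ y φ| ≤ C * ‖y - x₀‖ ^ 2 * ‖φ‖)
    (xh : X) (hxh : xh ∈ Xh) (hGalerkin : ∀ φ ∈ Xh, G xh φ = 0)
    (x₁ : X) (hx₁ : x₁ ∈ Xh)
    (hNewton : ∀ φ ∈ Xh, G' x₀ (x₁ - x₀) φ = -G x₀ φ) :
    ‖xh - x₁‖ ≤ (C / c) * ‖xh - x₀‖ ^ 2 :=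
  stmt_4_general G G' R c C hc Xh x₀ hinfsup hTaylor hR xh hxh hGalerkin x₁ hx₁ hNewton
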